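/- Periodicity transfer for frequency-until, bad-loop case (Lemma: periodic, item 2): under the same setting, suppose bal_φ(v) ≤ 0 (v is bad or neutral), positions i_1 ≤ i_2 = i_1 + n·|v| with the segment [i_1, i_2 + |v| − 1] contained in the φ/ψ-periodic region (σ(j) = σ(j+|v|) there). If there is i_3 ≥ i_1 with ψ at i_3 and bal_φ(σ[i_1 .. i_3−1]) ≥ 0, then there is i_3' ≥ i_2 with ψ at i_3' and bal_φ(σ[i_2 .. i_3'−1]) ≥ 0. -/
import Mathlib

def balSeg (x y : ℕ) (σ : ℕ → Bool) (a b : ℕ) : ℤ :=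
  (y : ℤ) * (((Finset.Ico a b).filter (fun j => σ j = true)).card : ℤ)
    - (x : ℤ) * ((b - a : ℕ) : ℤ)

lemma balSeg_eq_sum (x y : ℕ) (σ : ℕ → Bool) (a b : ℕ) :
    balSeg x y σ a b =
      ∑ j ∈ Finset.Ico a b, ((y : ℤ) * (if σ j = true then 1 else 0) - (x : ℤ)) := by
  unfold balSeg
  rw [Finset.sum_sub_distrib, ← Finset.mul_sum, Finset.sum_boole, Finset.sum_const,
    Nat.card_Ico, nsmul_eq_mul]
  ring

lemma balSeg_add (x y : ℕ) (σ : ℕ → Bool) {a b c : ℕ} (hab : a ≤ b) (hbc : b ≤ c) :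
    balSeg x y σ a c = balSeg x y σ a b + balSeg x y σ b c := by
  rw [balSeg_eq_sum, balSeg_eq_sum, balSeg_eq_sum, Finset.sum_Ico_consecutive _ hab hbc]

lemma balSeg_shift (x y : ℕ) (σ : ℕ → Bool) (a b q : ℕ)
    (h : ∀ j, a ≤ j → j < b → σ (j + q) = σ j) :
    balSeg x y σ (a + q) (b + q) = balSeg x y σ a b := by
  rw [balSeg_eq_sum, balSeg_eq_sum, Finset.sum_Ico_eq_sum_range, Finset.sum_Ico_eq_sum_range]
  have hba : b + q - (a + q) = b - a := by omega
  rw [hba]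
  apply Finset.sum_congr rfl
  intro i hi
  simp only [Finset.mem_range] at hi
  have hσ : σ (a + q + i) = σ (a + i) := by
    have := h (a + i) (Nat.le_add_right _ _) (by omega)
    rw [show a + q + i = a + i + q by ring, this]
  rw [hσ]

lemma balSeg_self (x y : ℕ) (σ : ℕ → Bool) (a : ℕ) : balSeg x y σ a a = 0 := by
  simp [balSeg]

theorem stmt12 (x y : ℕ) (hxy : x ≤ y) (hy : 0 < y)
    (σ : ℕ → Bool × Bool) (p n i1 i2 : ℕ) (hp : 0 < p)
    (hi2 : i2 = i1 + n * p)
    (hper : ∀ j, i1 ≤ j → j ≤ i2 + p - 1 → σ (j + p) = σ j)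
    (hbad : balSeg x y (fun j => (σ j).1) i1 (i1 + p) ≤ 0)
    (h : ∃ i3, i1 ≤ i3 ∧ (σ i3).2 = true ∧
        0 ≤ balSeg x y (fun j => (σ j).1) i1 i3) :
    ∃ i3, i2 ≤ i3 ∧ (σ i3).2 = true ∧
      0 ≤ balSeg x y (fun j => (σ j).1) i2 i3 := by
  set τ : ℕ → Bool := fun j => (σ j).1 with hτ
  -- iterated periodicity
  have hiter : ∀ m j, i1 ≤ j → j + m * p ≤ i2 + p → σ (j + m * p) = σ j := by
    intro m
    induction m with
    | zero => intro j _ _; simp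
    | succ m ih =>
      intro j hj hle
      have hmul : (m + 1) * p = m * p + p := by ring
      have hle' : j + m * p ≤ i2 := by omega
      have h1 : σ (j + m * p + p) = σ (j + m * p) :=
        hper _ (le_trans hj (Nat.le_add_right _ _)) (by omega)
      rw [hmul, ← Nat.add_assoc, h1]
      exact ih j hj (by omega)
  -- balance of k loops is ≤ 0
  have hblock : ∀ k, k ≤ n → balSeg x y τ i1 (i1 + k * p) ≤ 0 := by
    intro k
    induction k with
    | zero => intro _; simpa using (balSeg_self x y τ i1).le
    | succ k ih =>
      intro hk
      have hk' : k ≤ n := by omega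
      have hkp : k * p ≤ n * p := Nat.mul_le_mul_right p hk'
      have hmul : (k + 1) * p = k * p + p := by ring
      have hsplit : balSeg x y τ i1 (i1 + (k + 1) * p)
          = balSeg x y τ i1 (i1 + k * p) + balSeg x y τ (i1 + k * p) (i1 + (k + 1) * p) := by
        apply balSeg_add <;> omega
      have hshift : balSeg x y τ (i1 + k * p) (i1 + (k + 1) * p) = balSeg x y τ i1 (i1 + p) := by
        have he : i1 + (k + 1) * p = (i1 + p) + k * p := by omega
        rw [he, show i1 + k * p = i1 + k * p from rfl]
        have := balSeg_shift x y τ i1 (i1 + p) (k * p) (fun j hj hj' => by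
          have : σ (j + k * p) = σ j := hiter k j hj (by omega)
          simp [hτ, this])
        simpa using this
      rw [hsplit, hshift]
      have := ih hk'
      linarith [hbad]
  obtain ⟨i3, h13, hψ, hbal⟩ := h
  by_cases hcase : i2 ≤ i3
  · refine ⟨i3, hcase, hψ, ?_⟩
    have hsplit : balSeg x y τ i1 i3 = balSeg x y τ i1 i2 + balSeg x y τ i2 i3 :=
      balSeg_add x y τ (by omega) hcase
    have h2 : balSeg x y τ i1 i2 ≤ 0 := by
      have := hblock n le_rfl
      rwa [← hi2] at this
    linarith
  · push_neg at hcase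
    set k := (i3 - i1) / p with hk
    have hdm : p * k + (i3 - i1) % p = i3 - i1 := by
      rw [hk]; exact Nat.div_add_mod _ _
    have hmod : (i3 - i1) % p < p := Nat.mod_lt _ hp
    have hcomm : k * p = p * k := Nat.mul_comm k p
    have hk1 : i1 + k * p ≤ i3 := by omega
    have hk2 : i3 < i1 + k * p + p := by omega
    have hkn : k < n := by
      by_contra hcon
      push_neg at hcon
      have : n * p ≤ k * p := Nat.mul_le_mul_right p hcon
      omega
    have hmul1 : (n - k) * p + k * p = n * p := by
      rw [← Nat.add_mul]; congr 1; omega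
    refine ⟨i3 + (n - k) * p, by omega, ?_, ?_⟩
    · have hσ : σ (i3 + (n - k) * p) = σ i3 := hiter (n - k) i3 h13 (by omega)
      rw [hσ]; exact hψ
    · have hshift : balSeg x y τ (i1 + k * p + (n - k) * p) (i3 + (n - k) * p)
          = balSeg x y τ (i1 + k * p) i3 := by
        apply balSeg_shift
        intro j hj hj'
        have : σ (j + (n - k) * p) = σ j := hiter (n - k) j (by omega) (by omega)
        simp [hτ, this]
      have he : i2 = i1 + k * p + (n - k) * p := by omega
      rw [he, hshift]
      have hsplit : balSeg x y τ i1 i3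
          = balSeg x y τ i1 (i1 + k * p) + balSeg x y τ (i1 + k * p) i3 :=
        balSeg_add x y τ (by omega) hk1
      have := hblock k (by omega)
      linarith
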